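/- Let Q : [0,R] → ℝ be continuous, nonnegative, twice differentiable on (0,R), with Q(0) = 0 and Q(R) ≤ 0, and suppose Q''(r) + Q'(r)/r − Q(r)/r² ≥ 0 on (0,R). Then Q ≤ 0 on [0,R] (hence Q ≡ 0). -/

import Mathlib

/-! At an interior maximum `c` of `Q` we have `Q'(c) = 0` and `Q''(c) ≤ 0`, so `L[Q](c) ≥ 0`
forces `Q(c) ≤ 0`; the boundary values are `≤ 0` as well. -/

open Set Filter Topology

/-- If `deriv (deriv f) x > 0`, the second-derivative test makes `x` also a local minimum,
so `f` is locally constant near `x`. -/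
theorem IsLocalMax.deriv_deriv_nonpos {f : ℝ → ℝ} {x : ℝ} (hmax : IsLocalMax f x)
    (hcont : ContinuousAt f x) : deriv (deriv f) x ≤ 0 := by
  by_contra! hpos
  have hmin : IsLocalMin f x := isLocalMin_of_deriv_deriv_pos hpos hmax.deriv_eq_zero hcont
  have hconst : f =ᶠ[𝓝 x] fun _ => f x := by
    filter_upwards [hmin, hmax] with y hy₁ hy₂ using le_antisymm hy₂ hy₁
  have hzero : deriv (deriv f) x = 0 := by
    rw [hconst.deriv.deriv_eq]
    simp
  exact hpos.ne' hzero

theorem nonpos_of_isLocalMax_of_subsolution {Q : ℝ → ℝ} {c : ℝ} (hc : c ≠ 0)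
    (hmax : IsLocalMax Q c) (hcont : ContinuousAt Q c)
    (hsub : 0 ≤ deriv (deriv Q) c + deriv Q c / c - Q c / c ^ 2) : Q c ≤ 0 := by
  have hQ'' := hmax.deriv_deriv_nonpos hcont
  rw [hmax.deriv_eq_zero, zero_div, add_zero] at hsub
  have hdiv : Q c / c ^ 2 ≤ 0 := by linarith
  simpa using (div_le_iff₀ (by positivity : 0 < c ^ 2)).mp hdiv

theorem le_of_forall_isLocalMax_le {f : ℝ → ℝ} {a b M : ℝ} (hf : ContinuousOn f (Icc a b))
    (ha : f a ≤ M) (hb : f b ≤ M) (hint : ∀ c ∈ Ioo a b, IsLocalMax f c → f c ≤ M) :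
    ∀ x ∈ Icc a b, f x ≤ M := by
  intro x hx
  obtain ⟨c, hc, hcmax⟩ := isCompact_Icc.exists_isMaxOn ⟨x, hx⟩ hf
  refine (hcmax hx).trans ?_
  rcases eq_or_lt_of_le hc.1 with rfl | hac
  · exact ha
  rcases eq_or_lt_of_le hc.2 with rfl | hcb
  · exact hb
  exact hint c ⟨hac, hcb⟩ (hcmax.isLocalMax (Icc_mem_nhds hac hcb))

theorem stmt3_general (R : ℝ) (Q : ℝ → ℝ)
    (hcont : ContinuousOn Q (Set.Icc 0 R))
    (hQ0 : Q 0 = 0) (hQR : Q R ≤ 0)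
    (hsub : ∀ r ∈ Set.Ioo (0:ℝ) R,
      0 ≤ deriv (deriv Q) r + deriv Q r / r - Q r / r^2) :
    ∀ r ∈ Set.Icc 0 R, Q r ≤ 0 :=
  le_of_forall_isLocalMax_le hcont hQ0.le hQR fun c hc hmax =>
    nonpos_of_isLocalMax_of_subsolution hc.1.ne' hmax
      (hcont.continuousAt (Icc_mem_nhds hc.1 hc.2)) (hsub c hc)

/-- Maximum principle for the operator `L[Q] = Q'' + Q'/r − Q/r²` on `(0,R)`:
a nonnegative continuous subsolution (`L[Q] ≥ 0`) which is `C²` on `(0,R)` with `Q(0) = 0`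
and `Q(R) ≤ 0` satisfies `Q ≤ 0` on `[0,R]` (hence `Q ≡ 0`). -/
theorem stmt3 (R : ℝ) (hR : 0 < R) (Q : ℝ → ℝ)
    (hcont : ContinuousOn Q (Set.Icc 0 R))
    (hC2 : ContDiffOn ℝ 2 Q (Set.Ioo 0 R))
    (hnonneg : ∀ r ∈ Set.Icc 0 R, 0 ≤ Q r)
    (hQ0 : Q 0 = 0) (hQR : Q R ≤ 0)
    (hsub : ∀ r ∈ Set.Ioo (0:ℝ) R,
      0 ≤ deriv (deriv Q) r + deriv Q r / r - Q r / r^2) :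
    ∀ r ∈ Set.Icc 0 R, Q r ≤ 0 :=
  stmt3_general R Q hcont hQ0 hQR hsub
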